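/- For a > 0, integers m and n with n ≥ |m| and n - |m| even, and nonzero real α, the integral over r from 0 to a of Z_{nm}(r/a) · J_m(αr) · r dr equals a · (-1)^{(n-m)/2} · J_{n+1}(aα)/α. -/

import Mathlib

open MeasureTheory Real Filter Topology

/-- Bessel function of the first kind of integer order `m`
(via the standard integral representation). -/
noncomputable def besselJ (m : ℤ) (x : ℝ) : ℝ :=
  (1 / (2 * Real.pi)) * ∫ θ in (0:ℝ)..(2 * Real.pi), Real.cos (m * θ - x * Real.sin θ)

/-- Radial Zernike polynomial `Z_{nm}` for `m : ℤ`, `n ≥ |m|`, `n - |m|` even. -/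
noncomputable def Zern (n : ℕ) (m : ℤ) (r : ℝ) : ℝ :=
  ∑ j ∈ Finset.range ((n - m.natAbs) / 2 + 1),
    ((-1 : ℝ) ^ j * (Nat.factorial (n - j) : ℝ) /
      ((Nat.factorial j : ℝ) * (Nat.factorial ((n + m.natAbs) / 2 - j) : ℝ) *
        (Nat.factorial ((n - m.natAbs) / 2 - j) : ℝ))) * r ^ (n - 2 * j)

/-!
Write `Z_{μ+2s, μ}(r) = ∑ₖ c_{s,k} r^(μ+2k)` with `c_{s,k} = (-1)^(s+k) C(s,k) C(μ+s+k, s)`;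
after the substitution `r = a u` the integral is a combination of the moments
`M_μ(k) = ∫₀¹ r^(μ+2k+1) J_μ(x r) dr`. Since `d/dr [r^(μ+1) J_{μ+1}(x r)] = x r^(μ+1) J_μ(x r)`,
integration by parts gives `x M_μ(k) = J_{μ+1}(x) - 2k M_{μ+1}(k-1)`, while the coefficients
satisfy `∑ₖ c_{s,k} = 1` and `(k+1) c^μ_{s,k+1} = ∑_{p<s} (μ+2p+2) c^{μ+1}_{p,k}`. Together these
express the integral for `(μ, s)` through those for `(μ+1, p)`, `p < s`; by induction on `s`, the
recurrence `x (J_{ν-1} + J_{ν+1}) = 2ν J_ν` makes the resulting sum telescope to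
`(-1)^s J_{μ+2s+1}(x) / x`. Negative `m` reduce to `|m|` through `J_{-q} = (-1)^q J_q`.
-/

open Finset

lemma besselJ_sub_one_sub_besselJ_add_one (q : ℤ) (x : ℝ) :
    besselJ (q - 1) x - besselJ (q + 1) x
      = π⁻¹ * ∫ θ in (0:ℝ)..2 * π, sin θ * sin (q * θ - x * sin θ) := by
  have product_to_sum : ∀ θ : ℝ, cos (((q - 1 : ℤ) : ℝ) * θ - x * sin θ)
      - cos (((q + 1 : ℤ) : ℝ) * θ - x * sin θ) = 2 * (sin θ * sin (q * θ - x * sin θ)) := by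
    intro θ
    rw [← mul_assoc, mul_right_comm, two_mul_sin_mul_sin]
    push_cast
    ring_nf
  simp only [besselJ]
  rw [← mul_sub, ← intervalIntegral.integral_sub (by apply Continuous.intervalIntegrable; fun_prop)
    (by apply Continuous.intervalIntegrable; fun_prop)]
  simp only [product_to_sum, intervalIntegral.integral_const_mul]
  ring

lemma besselJ_sub_one_add_besselJ_add_one (q : ℤ) (x : ℝ) :
    besselJ (q - 1) x + besselJ (q + 1) x
      = π⁻¹ * ∫ θ in (0:ℝ)..2 * π, cos θ * cos (q * θ - x * sin θ) := by
  have product_to_sum : ∀ θ : ℝ, cos (((q - 1 : ℤ) : ℝ) * θ - x * sin θ)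
      + cos (((q + 1 : ℤ) : ℝ) * θ - x * sin θ) = 2 * (cos θ * cos (q * θ - x * sin θ)) := by
    intro θ
    rw [← mul_assoc, mul_right_comm, two_mul_cos_mul_cos]
    push_cast
    ring_nf
  simp only [besselJ]
  rw [← mul_add, ← intervalIntegral.integral_add (by apply Continuous.intervalIntegrable; fun_prop)
    (by apply Continuous.intervalIntegrable; fun_prop)]
  simp only [product_to_sum, intervalIntegral.integral_const_mul]
  ring

lemma hasDerivAt_besselJ (q : ℤ) (x : ℝ) :
    HasDerivAt (besselJ q) ((besselJ (q - 1) x - besselJ (q + 1) x) / 2) x := by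
  have hasDerivAt_integrand : ∀ θ y : ℝ, HasDerivAt (fun y => cos (q * θ - y * sin θ))
      (sin θ * sin (q * θ - y * sin θ)) y := fun θ y => by
    simpa [mul_comm] using ((hasDerivAt_mul_const (sin θ)).const_sub ((q : ℝ) * θ)).cos
  have hasDerivAt_integral := (intervalIntegral.hasDerivAt_integral_of_dominated_loc_of_deriv_le
    (μ := volume) (a := 0) (b := 2 * π) (bound := fun _ => 1) (Metric.ball_mem_nhds x one_pos)
    (Eventually.of_forall fun y => (by fun_prop : Continuous _).aestronglyMeasurable)
    (by apply Continuous.intervalIntegrable; fun_prop)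
    (by fun_prop : Continuous _).aestronglyMeasurable
    (ae_of_all _ fun θ _ y _ => by
      simpa [abs_mul] using mul_le_one₀ (abs_sin_le_one θ) (abs_nonneg _) (abs_sin_le_one _))
    intervalIntegrable_const
    (ae_of_all _ fun θ _ y _ => hasDerivAt_integrand θ y)).2.const_mul (1 / (2 * π))
  rw [besselJ_sub_one_sub_besselJ_add_one]
  exact hasDerivAt_integral.congr_deriv (by ring)

lemma continuous_besselJ (q : ℤ) : Continuous (besselJ q) :=
  continuous_iff_continuousAt.2 fun x => (hasDerivAt_besselJ q x).continuousAt

lemma mul_besselJ_sub_one_add_besselJ_add_one (q : ℤ) (x : ℝ) :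
    x * (besselJ (q - 1) x + besselJ (q + 1) x) = 2 * q * besselJ q x := by
  have hasDerivAt_phase : ∀ θ, HasDerivAt (fun θ => sin (q * θ - x * sin θ))
      ((q - x * cos θ) * cos (q * θ - x * sin θ)) θ := fun θ => by
    have := ((hasDerivAt_id θ).const_mul (q : ℝ)).sub ((hasDerivAt_sin θ).const_mul x)
    simpa [mul_comm] using this.sin
  -- the phase `q θ - x sin θ` gains `2πq` over a period, so its sine is back where it started
  have integral_eq_zero :
      ∫ θ in (0:ℝ)..2 * π, (q - x * cos θ) * cos (q * θ - x * sin θ) = 0 := by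
    rw [intervalIntegral.integral_eq_sub_of_hasDerivAt (fun θ _ => hasDerivAt_phase θ)
      (by apply Continuous.intervalIntegrable; fun_prop)]
    simp only [mul_zero, sin_zero, sin_two_pi, sub_zero]
    convert sin_int_mul_pi (2 * q) using 2
    push_cast
    ring
  simp only [sub_mul, mul_assoc] at integral_eq_zero
  rw [intervalIntegral.integral_sub (by apply Continuous.intervalIntegrable; fun_prop)
    (by apply Continuous.intervalIntegrable; fun_prop), intervalIntegral.integral_const_mul,
    intervalIntegral.integral_const_mul] at integral_eq_zero
  rw [besselJ_sub_one_add_besselJ_add_one, besselJ]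
  linear_combination (-π⁻¹) * integral_eq_zero

lemma besselJ_neg_natCast (q : ℕ) (x : ℝ) : besselJ (-q) x = (-1) ^ q * besselJ q x := by
  have periodic : Function.Periodic (fun θ => cos (q * θ + x * sin θ)) (2 * π) := fun θ => by
    simp only [sin_add_two_pi, mul_add, add_right_comm _ (q * (2 * π)), cos_add_nat_mul_two_pi]
  have shift_by_pi :
      ∀ θ, cos (q * (θ + π) + x * sin (θ + π)) = (-1) ^ q * cos (q * θ - x * sin θ) := fun θ => by
    rw [sin_add_pi, ← cos_add_nat_mul_pi]
    ring_nf
  have integral_shift := intervalIntegral.integral_comp_add_right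
    (fun θ => cos (q * θ + x * sin θ)) π (a := 0) (b := 2 * π)
  rw [zero_add, add_comm, periodic.intervalIntegral_add_eq π 0, zero_add] at integral_shift
  simp only [besselJ, Int.cast_neg, Int.cast_natCast, neg_mul, ← neg_add', cos_neg]
  rw [← integral_shift]
  simp only [shift_by_pi, intervalIntegral.integral_const_mul]
  ring

lemma hasDerivAt_besselJ_mul_pow (μ : ℕ) (x r : ℝ) :
    HasDerivAt (fun r => besselJ (μ + 1) (x * r) * r ^ (μ + 1))
      (x * besselJ μ (x * r) * r ^ (μ + 1)) r := by
  have recurrence := mul_besselJ_sub_one_add_besselJ_add_one (μ + 1) (x * r)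
  have chain := (((hasDerivAt_besselJ (μ + 1) (x * r)).comp r
    ((hasDerivAt_id r).const_mul x)).mul (hasDerivAt_pow (μ + 1) r))
  refine chain.congr_deriv ?_
  simp only [Function.comp_apply, add_sub_cancel_right, add_assoc, Nat.add_sub_cancel]
    at recurrence ⊢
  push_cast at recurrence ⊢
  linear_combination (-(r ^ μ / 2)) * recurrence

noncomputable def besselMoment (x : ℝ) (μ k : ℕ) : ℝ :=
  ∫ r in (0:ℝ)..1, r ^ (μ + 2 * k + 1) * besselJ μ (x * r)

lemma mul_besselMoment_zero (x : ℝ) (μ : ℕ) : x * besselMoment x μ 0 = besselJ (μ + 1) x := by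
  have ftc := intervalIntegral.integral_eq_sub_of_hasDerivAt (a := 0) (b := 1)
    (fun r _ => hasDerivAt_besselJ_mul_pow μ x r)
    (by have := continuous_besselJ μ; apply Continuous.intervalIntegrable; fun_prop)
  simp only [mul_one, one_pow, mul_zero, ne_eq, Nat.add_one_ne_zero, not_false_eq_true, zero_pow,
    sub_zero] at ftc
  rw [besselMoment, ← intervalIntegral.integral_const_mul, ← ftc]
  exact intervalIntegral.integral_congr fun r _ => by ring

lemma mul_besselMoment_succ (x : ℝ) (μ k : ℕ) :
    x * besselMoment x μ (k + 1) = besselJ (μ + 1) x - 2 * (k + 1) * besselMoment x (μ + 1) k := by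
  have hasDerivAt_pow_even : ∀ r : ℝ, HasDerivAt (fun r => r ^ (2 * k + 2))
      (2 * (k + 1) * r ^ (2 * k + 1)) r := fun r => by
    simpa [mul_add, add_mul] using hasDerivAt_pow (2 * k + 2) r
  have parts := intervalIntegral.integral_mul_deriv_eq_deriv_mul (a := 0) (b := 1)
    (fun r _ => hasDerivAt_pow_even r) (fun r _ => hasDerivAt_besselJ_mul_pow μ x r)
    (by apply Continuous.intervalIntegrable; fun_prop)
    (by have := continuous_besselJ μ; apply Continuous.intervalIntegrable; fun_prop)
  simp only [one_pow, mul_one, one_mul, ne_eq, Nat.add_eq_zero_iff, OfNat.ofNat_ne_zero,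
    and_false, not_false_eq_true, zero_pow, mul_zero, zero_mul, sub_zero] at parts
  have moment_eq : x * besselMoment x μ (k + 1)
      = ∫ r in (0:ℝ)..1, r ^ (2 * k + 2) * (x * besselJ μ (x * r) * r ^ (μ + 1)) := by
    rw [besselMoment, ← intervalIntegral.integral_const_mul]
    exact intervalIntegral.integral_congr fun r _ => by ring
  have moment_succ_eq : 2 * (k + 1) * besselMoment x (μ + 1) k
      = ∫ r in (0:ℝ)..1,
          2 * (k + 1) * r ^ (2 * k + 1) * (besselJ (μ + 1) (x * r) * r ^ (μ + 1)) := by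
    rw [besselMoment, ← intervalIntegral.integral_const_mul]
    exact intervalIntegral.integral_congr fun r _ => by push_cast; ring
  rw [moment_eq, moment_succ_eq, parts]

/-- The coefficient of `r ^ (μ + 2 * k)` in the radial Zernike polynomial `Z_{μ + 2 s, μ}`; the sign
`(-1) ^ (s + k)` stands for `(-1) ^ (s - k)` without truncated subtraction. -/
noncomputable def zernikeCoeff (μ s k : ℕ) : ℝ :=
  (-1) ^ (s + k) * s.choose k * (μ + s + k).choose s

lemma zernikeCoeff_eq_zero_of_lt {μ s k : ℕ} (h : s < k) : zernikeCoeff μ s k = 0 := by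
  simp [zernikeCoeff, Nat.choose_eq_zero_of_lt h]

open Nat in
lemma zernikeCoeff_eq_factorial {μ s k : ℕ} (hk : k ≤ s) :
    zernikeCoeff μ s k = (-1) ^ (s - k) * (μ + s + k)! / ((s - k)! * (μ + k)! * k !) := by
  rw [zernikeCoeff, Nat.cast_choose ℝ hk, Nat.cast_choose ℝ (by omega : s ≤ μ + s + k),
    show μ + s + k - s = μ + k by omega, show s + k = s - k + 2 * k by omega, pow_add, pow_mul]
  field_simp
  norm_num

/-- `Z_{μ + 2 s, μ}(1) = 1`: the sum is the `s`-th forward difference of the degree `s` polynomial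
`k ↦ (μ + s + k).choose s`, whose leading coefficient is `1 / s!`. -/
lemma sum_zernikeCoeff (μ s : ℕ) : ∑ k ∈ range (s + 1), zernikeCoeff μ s k = 1 := by
  have fwdDiff_eq := congr_fun (fwdDiff_iter_choose 0 s) (μ + s)
  rw [fwdDiff_iter_eq_sum_shift] at fwdDiff_eq
  simp only [add_zero, smul_eq_mul, mul_one, Nat.choose_zero_right, Nat.cast_one] at fwdDiff_eq
  rw [← Int.cast_one (R := ℝ), ← fwdDiff_eq]
  push_cast
  refine sum_congr rfl fun k hk => ?_
  replace hk : k ≤ s := mem_range_succ_iff.1 hk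
  rw [zernikeCoeff, show s + k = s - k + 2 * k by omega, pow_add, pow_mul]
  norm_num

lemma add_one_mul_zernikeCoeff_succ_sub (μ p k : ℕ) :
    (k + 1) * (zernikeCoeff μ (p + 1) (k + 1) - zernikeCoeff μ p (k + 1))
      = (μ + 2 * p + 2) * zernikeCoeff (μ + 1) p k := by
  set N := μ + p + k + 1 with hN
  have hN' : (N : ℝ) = μ + p + k + 1 := by rw [hN]; push_cast; ring
  have pascal : ((p + 1).choose (k + 1) : ℝ) = p.choose k + p.choose (k + 1) := by
    exact_mod_cast Nat.choose_succ_succ' p k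
  have absorb_p : ((p + 1 : ℕ) : ℝ) * p.choose k = (p + 1).choose (k + 1) * (k + 1 : ℕ) := by
    exact_mod_cast Nat.add_one_mul_choose_eq p k
  have absorb_N : ((N + 1 : ℕ) : ℝ) * N.choose p = (N + 1).choose (p + 1) * (p + 1 : ℕ) := by
    exact_mod_cast Nat.add_one_mul_choose_eq N p
  rw [zernikeCoeff, zernikeCoeff, zernikeCoeff, show μ + (p + 1) + (k + 1) = N + 1 by omega,
    show μ + p + (k + 1) = N by omega, show μ + 1 + p + k = N by omega]
  push_cast at absorb_p absorb_N ⊢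
  linear_combination (-1) ^ (p + k) * (-(((N + 1).choose (p + 1) : ℝ) + N.choose p) * absorb_p
    - p.choose k * absorb_N - (k + 1) * N.choose p * pascal + N.choose p * p.choose k * hN')

lemma sum_range_mul_zernikeCoeff (μ s k : ℕ) :
    ∑ p ∈ range s, (μ + 2 * p + 2) * zernikeCoeff (μ + 1) p k
      = (k + 1) * zernikeCoeff μ s (k + 1) := by
  induction s with
  | zero => simp [zernikeCoeff]
  | succ s ih => rw [sum_range_succ, ih, ← add_one_mul_zernikeCoeff_succ_sub]; ring

/-- The radial Zernike polynomial `Z_{μ + 2 s, μ}`. -/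
noncomputable def zernikeRadial (μ s : ℕ) (r : ℝ) : ℝ :=
  ∑ k ∈ range (s + 1), zernikeCoeff μ s k * r ^ (μ + 2 * k)

lemma Zern_eq_zernikeRadial {n : ℕ} {m : ℤ} (h₁ : m.natAbs ≤ n) (h₂ : (n - m.natAbs) % 2 = 0) :
    Zern n m = zernikeRadial m.natAbs ((n - m.natAbs) / 2) := by
  funext r
  set μ := m.natAbs
  set s := (n - μ) / 2
  rw [Zern, zernikeRadial, ← sum_range_reflect]
  refine sum_congr rfl fun k hk => ?_
  replace hk : k ≤ s := mem_range_succ_iff.1 hk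
  rw [zernikeCoeff_eq_factorial hk, show s + 1 - 1 - k = s - k by omega,
    show n - (s - k) = μ + s + k by omega, show (n + μ) / 2 - (s - k) = μ + k by omega,
    show s - (s - k) = k by omega, show n - 2 * (s - k) = μ + 2 * k by omega]

lemma sum_range_zernikeCoeff_mul_of_lt {μ p N : ℕ} (f : ℕ → ℝ) (h : p < N) :
    ∑ k ∈ range N, zernikeCoeff μ p k * f k = ∑ k ∈ range (p + 1), zernikeCoeff μ p k * f k := by
  refine (sum_subset (range_subset_range.2 h) fun k _ hk => ?_).symm
  rw [zernikeCoeff_eq_zero_of_lt (by simpa using hk), zero_mul]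

lemma mul_sum_zernikeCoeff_mul_besselMoment_eq_sub (x : ℝ) (μ s : ℕ) :
    x * ∑ k ∈ range (s + 1), zernikeCoeff μ s k * besselMoment x μ k
      = besselJ (μ + 1) x - 2 * ∑ p ∈ range s, (μ + 2 * p + 2) *
          ∑ k ∈ range (p + 1), zernikeCoeff (μ + 1) p k * besselMoment x (μ + 1) k := by
  calc x * ∑ k ∈ range (s + 1), zernikeCoeff μ s k * besselMoment x μ k
      = besselJ (μ + 1) x * ∑ k ∈ range (s + 1), zernikeCoeff μ s k
          - 2 * ∑ k ∈ range s, (k + 1) * zernikeCoeff μ s (k + 1) * besselMoment x (μ + 1) k := by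
        have term_eq : ∀ k ∈ range s, x * (zernikeCoeff μ s (k + 1) * besselMoment x μ (k + 1))
            = besselJ (μ + 1) x * zernikeCoeff μ s (k + 1)
              - 2 * ((k + 1) * zernikeCoeff μ s (k + 1) * besselMoment x (μ + 1) k) := fun k _ => by
          rw [mul_left_comm, mul_besselMoment_succ]
          ring
        rw [sum_range_succ', mul_add, mul_sum, sum_congr rfl term_eq, sum_sub_distrib, ← mul_sum,
          ← mul_sum, mul_left_comm, mul_besselMoment_zero, sum_range_succ' (zernikeCoeff μ s)]
        ring
    _ = besselJ (μ + 1) x - 2 * ∑ k ∈ range s, ∑ p ∈ range s,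
          (μ + 2 * p + 2) * (zernikeCoeff (μ + 1) p k * besselMoment x (μ + 1) k) := by
        simp only [sum_zernikeCoeff, ← sum_range_mul_zernikeCoeff, sum_mul, mul_assoc]
        ring
    _ = _ := by
        rw [sum_comm]
        congr 2
        refine sum_congr rfl fun p hp => ?_
        rw [← mul_sum, sum_range_zernikeCoeff_mul_of_lt _ (mem_range.1 hp)]

lemma mul_sum_zernikeCoeff_mul_besselMoment_eq {x : ℝ} (hx : x ≠ 0) (s μ : ℕ) :
    x * ∑ k ∈ range (s + 1), zernikeCoeff μ s k * besselMoment x μ k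
      = (-1) ^ s * besselJ (μ + 2 * s + 1) x := by
  induction s using Nat.strong_induction_on generalizing μ with
  | _ s ih =>
  set g : ℕ → ℝ := fun p => (-1) ^ p * besselJ (μ + 2 * p + 1) x with hg
  have term_eq : ∀ p ∈ range s, (μ + 2 * p + 2) *
      ∑ k ∈ range (p + 1), zernikeCoeff (μ + 1) p k * besselMoment x (μ + 1) k
        = (g p - g (p + 1)) / 2 := by
    intro p hp
    have ihp := ih p (mem_range.1 hp) (μ + 1)
    have recurrence := mul_besselJ_sub_one_add_besselJ_add_one (μ + 2 * p + 2) x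
    rw [show ((μ + 1 : ℕ) : ℤ) + 2 * p + 1 = μ + 2 * p + 2 by push_cast; ring] at ihp
    rw [show (μ : ℤ) + 2 * p + 2 - 1 = μ + 2 * p + 1 by ring,
      show (μ : ℤ) + 2 * p + 2 + 1 = μ + 2 * (p + 1 : ℕ) + 1 by push_cast; ring] at recurrence
    apply mul_left_cancel₀ hx
    simp only [hg]
    push_cast at ihp recurrence ⊢
    linear_combination (μ + 2 * p + 2 : ℝ) * ihp + (-(-1) ^ p / 2) * recurrence
  rw [mul_sum_zernikeCoeff_mul_besselMoment_eq_sub, sum_congr rfl term_eq, ← sum_div,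
    sum_range_sub', hg]
  simp only [pow_zero, CharP.cast_eq_zero, mul_zero, add_zero, one_mul]
  ring

theorem integral_zernikeRadial_mul_besselJ {x : ℝ} (hx : x ≠ 0) (μ s : ℕ) :
    ∫ r in (0:ℝ)..1, zernikeRadial μ s r * besselJ μ (x * r) * r
      = (-1) ^ s * besselJ (μ + 2 * s + 1) x / x := by
  have integral_eq_sum : ∫ r in (0:ℝ)..1, zernikeRadial μ s r * besselJ μ (x * r) * r
      = ∑ k ∈ range (s + 1), zernikeCoeff μ s k * besselMoment x μ k := by
    simp only [zernikeRadial, sum_mul]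
    rw [intervalIntegral.integral_finsetSum fun k _ => by
      have := continuous_besselJ μ; apply Continuous.intervalIntegrable; fun_prop]
    refine sum_congr rfl fun k _ => ?_
    rw [besselMoment, ← intervalIntegral.integral_const_mul]
    exact intervalIntegral.integral_congr fun r _ => by ring
  rw [integral_eq_sum, eq_div_iff hx, mul_comm, mul_sum_zernikeCoeff_mul_besselMoment_eq hx]

lemma besselJ_eq_neg_one_zpow_mul_besselJ_natAbs (m : ℤ) (x : ℝ) :
    besselJ m x = (-1) ^ ((m.natAbs - m) / 2) * besselJ m.natAbs x := by
  obtain ⟨q, rfl | rfl⟩ := Int.eq_nat_or_neg m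
  · simp
  · rw [Int.natAbs_neg, Int.natAbs_natCast, show ((q : ℤ) - -q) / 2 = q by omega, zpow_natCast,
      besselJ_neg_natCast]

theorem zernike_bessel_integral_scaled_general (a : ℝ) (m : ℤ) (n : ℕ)
    (h₁ : m.natAbs ≤ n) (h₂ : (n - m.natAbs) % 2 = 0) (α : ℝ) (hα : α ≠ 0) :
    ∫ r in (0:ℝ)..a, Zern n m (r / a) * besselJ m (α * r) * r
      = a * (-1 : ℝ) ^ (((n : ℤ) - m) / 2) * besselJ ((n : ℤ) + 1) (a * α) / α := by
  obtain rfl | ha := eq_or_ne a 0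
  · simp
  rw [Zern_eq_zernikeRadial h₁ h₂]
  set μ := m.natAbs
  set s := (n - μ) / 2
  have sign_eq : (-1 : ℝ) ^ (((n : ℤ) - m) / 2) = (-1) ^ s * (-1) ^ ((μ - m) / 2) := by
    rw [← zpow_natCast, ← zpow_add₀ (by norm_num)]
    congr 1
    omega
  have order_eq : (n : ℤ) + 1 = μ + 2 * s + 1 := by omega
  calc ∫ r in (0:ℝ)..a, zernikeRadial μ s (r / a) * besselJ m (α * r) * r
      = a ^ 2 * ∫ u in (0:ℝ)..1, zernikeRadial μ s u * besselJ m (a * α * u) * u := by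
        have substitution := intervalIntegral.smul_integral_comp_mul_left (a := 0) (b := 1)
          (fun r => zernikeRadial μ s (r / a) * besselJ m (α * r) * r) a
        rw [mul_zero, mul_one] at substitution
        rw [← substitution, smul_eq_mul, ← intervalIntegral.integral_const_mul,
          ← intervalIntegral.integral_const_mul]
        refine intervalIntegral.integral_congr fun u _ => ?_
        field_simp
    _ = a ^ 2 * (-1) ^ ((μ - m) / 2)
          * ∫ u in (0:ℝ)..1, zernikeRadial μ s u * besselJ μ (a * α * u) * u := by
        simp only [besselJ_eq_neg_one_zpow_mul_besselJ_natAbs m,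
          ← intervalIntegral.integral_const_mul]
        refine intervalIntegral.integral_congr fun u _ => ?_
        ring
    _ = _ := by
        rw [integral_zernikeRadial_mul_besselJ (mul_ne_zero ha hα), sign_eq, order_eq]
        field_simp

theorem zernike_bessel_integral_scaled (a : ℝ) (ha : 0 < a) (m : ℤ) (n : ℕ)
    (h₁ : m.natAbs ≤ n) (h₂ : (n - m.natAbs) % 2 = 0) (α : ℝ) (hα : α ≠ 0) :
    ∫ r in (0:ℝ)..a, Zern n m (r / a) * besselJ m (α * r) * r
      = a * (-1 : ℝ) ^ (((n : ℤ) - m) / 2) * besselJ ((n : ℤ) + 1) (a * α) / α :=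
  zernike_bessel_integral_scaled_general a m n h₁ h₂ α hα
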